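/- arXiv:math/0512217 — 2 statements merged into one kernel-verified Lean document; each statement's English description precedes it below -/
import Mathlib

section
/- If D is an ultrafilter on an infinite cardinal κ, λ is a regular cardinal such that |α|^κ < λ for all α < λ, and each Boolean algebra B_i (i < κ) satisfies Depth⁺(B_i) ≤ λ, then the ultraproduct B = ∏_{i<κ} B_i / D satisfies Depth⁺(B) ≤ λ⁺. -/
open Cardinal

universe u

/-- `Depth B` : the supremum of the lengths `θ` of strictly increasing sequences in `B`. -/
noncomputable def orderDepth (B : Type u) [Preorder B] : Cardinal.{u} :=
  ⨆ p : {θ : Cardinal.{u} // ∃ f : θ.ord.ToType → B, StrictMono f}, p.1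

/-- `Depth⁺ B` : the supremum of `θ⁺` over lengths `θ` of strictly increasing sequences in `B`. -/
noncomputable def orderDepthPlus (B : Type u) [Preorder B] : Cardinal.{u} :=
  ⨆ p : {θ : Cardinal.{u} // ∃ f : θ.ord.ToType → B, StrictMono f}, Order.succ p.1

/-- The setoid on `∀ i, B i` of equality mod the ultrafilter `D`. -/
def ultraSetoid {ι : Type u} (D : Ultrafilter ι) (B : ι → Type u) : Setoid (∀ i, B i) where
  r f g := ∀ᶠ i in (D : Filter ι), f i = g i
  iseqv := by
    refine ⟨fun f => Filter.Eventually.of_forall fun i => rfl, fun {f g} h => ?_,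
      fun {f g h} h1 h2 => ?_⟩
    · exact h.mono fun i e => e.symm
    · exact h2.mp (h1.mono fun i e1 e2 => e1.trans e2)

/-- The ultraproduct `∏ᵢ B i / D`. -/
def UltraProduct {ι : Type u} (D : Ultrafilter ι) (B : ι → Type u) : Type u :=
  Quotient (ultraSetoid D B)

/-- The ultraproduct order: `⟨xᵢ⟩/D ≤ ⟨yᵢ⟩/D` iff `{i : xᵢ ≤ yᵢ} ∈ D`. -/
instance UltraProduct.instPartialOrder {ι : Type u} (D : Ultrafilter ι) (B : ι → Type u)
    [∀ i, PartialOrder (B i)] : PartialOrder (UltraProduct D B) where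
  le x y := Quotient.liftOn₂ x y (fun f g => ∀ᶠ i in (D : Filter ι), f i ≤ g i)
    (by
      intro f g f' g' hf hg
      refine propext ⟨fun h => ?_, fun h => ?_⟩
      · filter_upwards [h, hf, hg] with i h1 e1 e2
        rw [← e1, ← e2]; exact h1
      · filter_upwards [h, hf, hg] with i h1 e1 e2
        rw [e1, e2]; exact h1)
  le_refl x := Quotient.inductionOn x fun f => Filter.Eventually.of_forall fun i => le_refl _
  le_trans x y z := Quotient.inductionOn₃ x y z fun f g h h1 h2 =>
    h2.mp (h1.mono fun i a b => le_trans a b)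
  le_antisymm x y := Quotient.inductionOn₂ x y fun f g h1 h2 =>
    Quotient.sound (h2.mp (h1.mono fun i a b => le_antisymm a b))

/-- The equivalence class of `f` in the ultraproduct. -/
def UltraProduct.mk {ι : Type u} (D : Ultrafilter ι) (B : ι → Type u) (f : ∀ i, B i) :
    UltraProduct D B :=
  Quotient.mk (ultraSetoid D B) f

/-- `C` is a club (closed unbounded) subset of the ordinal `o`. -/
def IsClubIn (C : Set Ordinal.{u}) (o : Ordinal.{u}) : Prop :=
  (∀ a < o, ∃ b ∈ C, a < b ∧ b < o) ∧
  (∀ δ < o, Order.IsSuccLimit δ → (∀ a < δ, ∃ b ∈ C, a < b ∧ b < δ) → δ ∈ C)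

/-- `S` is stationary in the ordinal `o`: it meets every club subset of `o`. -/
def IsStationaryIn (S : Set Ordinal.{u}) (o : Ordinal.{u}) : Prop :=
  ∀ C, IsClubIn C o → (S ∩ C).Nonempty

namespace UltraDepthAux

open Ordinal Order Set

noncomputable def greedy {β : Type v} [Preorder β] (v : Ordinal.{u} → β) (t : β)
    (L : Ordinal.{u}) : Ordinal.{u} → Ordinal.{u} :=
  WellFounded.fix Ordinal.lt_wf fun ξ IH =>
    sInf {ε | ε < L ∧ v ε < t ∧ ∀ ζ, ∀ h : ζ < ξ, IH ζ h < ε ∧ v (IH ζ h) < v ε}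

def cand {β : Type v} [Preorder β] (v : Ordinal.{u} → β) (t : β) (L : Ordinal.{u})
    (ξ : Ordinal.{u}) : Set Ordinal.{u} :=
  {ε | ε < L ∧ v ε < t ∧ ∀ ζ, ∀ _h : ζ < ξ, greedy v t L ζ < ε ∧ v (greedy v t L ζ) < v ε}

theorem greedy_def {β : Type v} [Preorder β] (v : Ordinal.{u} → β) (t : β) (L ξ : Ordinal.{u}) :
    greedy v t L ξ = sInf (cand v t L ξ) := by
  rw [greedy, WellFounded.fix_eq]
  rfl

theorem mem_cand {β : Type v} [Preorder β] {v : Ordinal.{u} → β} {t : β} {L ξ ε : Ordinal.{u}} :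
    ε ∈ cand v t L ξ ↔
      ε < L ∧ v ε < t ∧ ∀ ζ, ∀ _h : ζ < ξ, greedy v t L ζ < ε ∧ v (greedy v t L ζ) < v ε :=
  Iff.rfl

theorem greedy_mem {β : Type v} [Preorder β] {v : Ordinal.{u} → β} {t : β} {L ξ : Ordinal.{u}}
    (h : (cand v t L ξ).Nonempty) : greedy v t L ξ ∈ cand v t L ξ := by
  rw [greedy_def]; exact csInf_mem h

theorem no_chain {lam : Cardinal.{u}} {β : Type u} [Preorder β]
    (hd : orderDepthPlus β ≤ lam) (w : Ordinal.{u} → β)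
    (hw : ∀ ξ ζ, ξ < ζ → ζ < lam.ord → w ξ < w ζ) : False := by
  set g : lam.ord.ToType → β :=
    fun t => w (((Ordinal.ToType.mk (o := lam.ord))).symm t : Set.Iio lam.ord) with hg
  have hgm : StrictMono g := by
    intro a b hab
    refine hw _ _ ?_ (((Ordinal.ToType.mk (o := lam.ord))).symm b).2
    exact Subtype.coe_lt_coe.2 ((((Ordinal.ToType.mk (o := lam.ord))).symm.lt_iff_lt).2 hab)
  have hbdd : BddAbove (Set.range
      fun p : {θ : Cardinal.{u} // ∃ f : θ.ord.ToType → β, StrictMono f} => Order.succ p.1) := by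
    refine ⟨Order.succ #β, ?_⟩
    rintro x ⟨p, rfl⟩
    apply Order.succ_le_succ
    obtain ⟨f, hf⟩ := p.2
    calc p.1 = #(p.1.ord.ToType) := by rw [Cardinal.mk_toType, Cardinal.card_ord]
    _ ≤ #β := Cardinal.mk_le_of_injective hf.injective
  have h1 : Order.succ lam ≤ orderDepthPlus β :=
    le_ciSup hbdd (⟨lam, g, hgm⟩ : {θ : Cardinal.{u} // ∃ f : θ.ord.ToType → β, StrictMono f})
  exact absurd (h1.trans hd) (Order.lt_succ lam).not_ge

theorem lam_pow_le {lam : Cardinal.{u}} {ι : Type u} (hreg : lam.IsRegular)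
    (hι : #ι < lam) (harith : ∀ α : Cardinal.{u}, α < lam → α ^ #ι < lam) :
    lam ^ #ι ≤ lam := by
  classical
  have hlim := Cardinal.isSuccLimit_ord hreg.aleph0_le
  set E := (Ordinal.ToType.mk (o := lam.ord)) with hE
  have key : #(ι → lam.ord.ToType) ≤ lam := by
    set σ : (ι → lam.ord.ToType) → Ordinal.{u} :=
      fun f => ⨆ i, ((E.symm (f i) : Set.Iio lam.ord) : Ordinal) + 1 with hσ
    have hσlt : ∀ f, σ f < lam.ord := fun f =>
      Ordinal.iSup_lt_ord (by rw [hreg.cof_eq]; exact hι)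
        (fun i => hlim.add_one_lt (E.symm (f i)).2)
    have hflt : ∀ (f : ι → lam.ord.ToType) (i : ι), f i < E ⟨σ f, hσlt f⟩ := by
      intro f i
      conv_lhs => rw [← E.apply_symm_apply (f i)]
      rw [E.lt_iff_lt]
      refine Subtype.coe_lt_coe.1 ?_
      refine lt_of_lt_of_le ?_ (Ordinal.le_iSup _ i)
      rw [Ordinal.add_one_eq_succ]; exact Order.lt_succ _
    set Φ : (ι → lam.ord.ToType) → Σ t : lam.ord.ToType, (ι → {s : lam.ord.ToType // s < t}) :=
      fun f => ⟨E ⟨σ f, hσlt f⟩, fun i => ⟨f i, hflt f i⟩⟩ with hΦdef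
    have hΦ : Function.Injective Φ := by
      intro f g h
      have := congrArg (fun p : Σ t : lam.ord.ToType, (ι → {s : lam.ord.ToType // s < t}) => fun i => ((p.2 i) : lam.ord.ToType)) h
      simpa [hΦdef] using this
    have hbound : ∀ t : lam.ord.ToType, #(ι → {s : lam.ord.ToType // s < t}) ≤ lam := by
      intro t
      have h1 : #{s : lam.ord.ToType // s < t} < lam := by
        have h2 := Ordinal.typein_lt_self t
        have h3 := Cardinal.lt_ord.1 h2
        exact h3
      calc #(ι → {s : lam.ord.ToType // s < t}) = #{s : lam.ord.ToType // s < t} ^ #ι := (Cardinal.power_def _ _).symm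
        _ ≤ lam := (harith _ h1).le
    calc #(ι → lam.ord.ToType) ≤ #(Σ t : lam.ord.ToType, (ι → {s : lam.ord.ToType // s < t})) := Cardinal.mk_le_of_injective hΦ
      _ = Cardinal.sum (fun t : lam.ord.ToType => #(ι → {s : lam.ord.ToType // s < t})) := Cardinal.mk_sigma _
      _ ≤ Cardinal.sum (fun _ : lam.ord.ToType => lam) := Cardinal.sum_le_sum _ _ hbound
      _ = #lam.ord.ToType * lam := Cardinal.sum_const' _ _
      _ = lam * lam := by rw [Cardinal.mk_toType, Cardinal.card_ord]
      _ = lam := Cardinal.mul_eq_self hreg.aleph0_le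
  calc lam ^ #ι = #lam.ord.ToType ^ #ι := by rw [Cardinal.mk_toType, Cardinal.card_ord]
    _ = #(ι → lam.ord.ToType) := Cardinal.power_def _ _
    _ ≤ lam := key

theorem exists_unbounded_fiber {Z : Type u} {lam : Cardinal.{u}} (hreg : lam.IsRegular)
    (hZ : #Z < lam) (F : Ordinal.{u} → Z) (lo : Ordinal.{u}) (hlo : lo < lam.ord) :
    ∃ z : Z, ∀ o, o < lam.ord → ∃ ε, ε < lam.ord ∧ lo < ε ∧ o < ε ∧ F ε = z := by
  by_contra hcon
  push_neg at hcon
  choose m hm1 hm2 using hcon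
  have hM : (⨆ z, m z) < lam.ord :=
    Ordinal.iSup_lt_ord (by rw [hreg.cof_eq]; exact hZ) hm1
  have hlim := Cardinal.isSuccLimit_ord hreg.aleph0_le
  set s := max lo (⨆ z, m z) with hs
  have hsl : s < lam.ord := max_lt hlo hM
  have h1 : s + 1 < lam.ord := hlim.add_one_lt hsl
  have h2 : lo < s + 1 := lt_of_le_of_lt (le_max_left _ _) (by
    rw [Ordinal.add_one_eq_succ]; exact Order.lt_succ _)
  have h3 : m (F (s + 1)) < s + 1 :=
    lt_of_le_of_lt ((Ordinal.le_iSup m _).trans (le_max_right _ _)) (by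
      rw [Ordinal.add_one_eq_succ]; exact Order.lt_succ _)
  exact hm2 (F (s+1)) (s+1) h1 h2 h3 rfl

theorem perDelta {ι : Type u} (D : Ultrafilter ι) (B : ι → Type u)
    [∀ i, BooleanAlgebra (B i)] {lam : Cardinal.{u}}
    (hreg : lam.IsRegular) (harith : ∀ α : Cardinal.{u}, α < lam → α ^ #ι < lam)
    (hdepth : ∀ i, orderDepthPlus (B i) ≤ lam) (hι : #ι < lam)
    (f : Ordinal.{u} → ∀ i, B i)
    (hlt : ∀ α β', α < β' → β' < (Order.succ lam).ord → {i | f α i < f β' i} ∈ D)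
    (hle : ∀ α β', α ≤ β' → β' < (Order.succ lam).ord → {i | f α i ≤ f β' i} ∈ D)
    {δ : Ordinal.{u}} (hδ : δ < (Order.succ lam).ord)
    (e : Ordinal.{u} → Ordinal.{u})
    (hemono : ∀ ξ ζ, ξ < ζ → ζ < lam.ord → e ξ < e ζ)
    (helt : ∀ ξ, ξ < lam.ord → e ξ < δ)
    (hecof : ∀ α, α < δ → ∃ ξ, ξ < lam.ord ∧ α < e ξ) :
    ∃ (bd : Ordinal.{u}) (ρ : ι → Ordinal.{u}), bd < δ ∧ (∀ i, ρ i < bd) ∧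
      {i | f (ρ i) i ≤ f δ i} ∈ D ∧ ∀ α, α < δ → {i | f (ρ i) i ≤ f α i} ∉ D := by
  classical
  have hlim := Cardinal.isSuccLimit_ord hreg.aleph0_le
  have hltone : ∀ a : Ordinal.{u}, a < a + 1 := fun a => by
    rw [Ordinal.add_one_eq_succ]; exact Order.lt_succ a
  have key : ∀ i : ι, ∃ est, est < lam.ord ∧ ∀ ε, est ≤ ε → ε < lam.ord →
      f (e ε) i < f δ i →
      ∃ w, w < est ∧ f (e w) i < f δ i ∧ ¬ f (e w) i < f (e ε) i := by
    intro i
    set v : Ordinal.{u} → B i := fun ε => f (e ε) i with hv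
    set t : B i := f δ i with ht
    have hbad : ∃ ξ, ξ < lam.ord ∧ cand v t lam.ord ξ = ∅ := by
      by_contra hcon
      push_neg at hcon
      have hmem : ∀ ξ, ξ < lam.ord → greedy v t lam.ord ξ ∈ cand v t lam.ord ξ := fun ξ h =>
        greedy_mem (hcon ξ h)
      exact no_chain (hdepth i) (fun ξ => v (greedy v t lam.ord ξ))
        (fun ξ ζ h1 h2 => ((mem_cand.1 (hmem ζ h2)).2.2 ξ h1).2)
    set ξ₀ := sInf {ξ | ξ < lam.ord ∧ cand v t lam.ord ξ = ∅} with hξ₀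
    have hξ₀mem : ξ₀ < lam.ord ∧ cand v t lam.ord ξ₀ = ∅ := csInf_mem hbad
    have hgood : ∀ ζ, ζ < ξ₀ → greedy v t lam.ord ζ ∈ cand v t lam.ord ζ := by
      intro ζ hζ
      refine greedy_mem (Set.nonempty_iff_ne_empty.2 ?_)
      intro hemp
      have hmem2 : ζ ∈ {ξ | ξ < lam.ord ∧ cand v t lam.ord ξ = ∅} :=
        ⟨hζ.trans hξ₀mem.1, hemp⟩
      exact absurd (csInf_le' hmem2) (not_le.2 hζ)
    refine ⟨(Ordinal.bsup ξ₀ fun ζ _ => greedy v t lam.ord ζ) + 1, ?_, ?_⟩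
    · refine hlim.add_one_lt (Ordinal.bsup_lt_ord ?_ ?_)
      · rw [hreg.cof_eq]; exact Cardinal.lt_ord.1 hξ₀mem.1
      · exact fun ζ hζ => (hgood ζ hζ).1
    · intro ε h1 h2 h3
      have hnotc : ε ∉ cand v t lam.ord ξ₀ := by rw [hξ₀mem.2]; exact Set.notMem_empty ε
      have hnall : ¬ ∀ ζ, ∀ _h : ζ < ξ₀,
          greedy v t lam.ord ζ < ε ∧ v (greedy v t lam.ord ζ) < v ε := by
        intro hall; exact hnotc (mem_cand.2 ⟨h2, h3, hall⟩)
      push_neg at hnall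
      obtain ⟨ζ, hζ, hbadζ⟩ := hnall
      have hwlt : greedy v t lam.ord ζ < ε :=
        lt_of_lt_of_le (lt_of_le_of_lt (Ordinal.le_bsup _ ζ hζ) (hltone _)) h1
      refine ⟨greedy v t lam.ord ζ, ?_, (mem_cand.1 (hgood ζ hζ)).2.1, ?_⟩
      · exact lt_of_le_of_lt (Ordinal.le_bsup _ ζ hζ) (hltone _)
      · intro hvlt; exact hbadζ hwlt hvlt
  choose est hestlt hwit using key
  set estar := ⨆ i, est i with hestar
  have hstar : estar < lam.ord := Ordinal.iSup_lt_ord (by rw [hreg.cof_eq]; exact hι) hestlt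
  set W : Ordinal.{u} → ι → Ordinal.{u} := fun ε i =>
    if h : estar < ε ∧ ε < lam.ord ∧ f (e ε) i < f δ i then
      (hwit i ε ((Ordinal.le_iSup est i).trans h.1.le) h.2.1 h.2.2).choose
    else 0 with hW
  have hWspec : ∀ ε i, estar < ε → ε < lam.ord → f (e ε) i < f δ i →
      W ε i < est i ∧ f (e (W ε i)) i < f δ i ∧ ¬ f (e (W ε i)) i < f (e ε) i := by
    intro ε i h1 h2 h3
    have hc : estar < ε ∧ ε < lam.ord ∧ f (e ε) i < f δ i := ⟨h1, h2, h3⟩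
    simp only [hW, dif_pos hc]
    exact (hwit i ε ((Ordinal.le_iSup est i).trans hc.1.le) hc.2.1 hc.2.2).choose_spec
  have hWle : ∀ ε i, W ε i ≤ estar := by
    intro ε i
    by_cases h : estar < ε ∧ ε < lam.ord ∧ f (e ε) i < f δ i
    · simp only [hW, dif_pos h]
      exact ((hwit i ε ((Ordinal.le_iSup est i).trans h.1.le) h.2.1 h.2.2).choose_spec.1.le).trans
        (Ordinal.le_iSup est i)
    · simp only [hW, dif_neg h]; exact zero_le
  set dataF : Ordinal.{u} → ((ι → (estar+1).ToType) × Set ι × Set ι) := fun ε =>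
    (fun i => (Ordinal.ToType.mk (o := (estar+1))) ⟨W ε i, lt_of_le_of_lt (hWle ε i) (hltone _)⟩,
     {i | f (e ε) i < f δ i},
     {i | f (e ε) i < f δ i ∧ f (e (W ε i)) i = f (e ε) i}) with hdataF
  have hSDcard : #((ι → (estar+1).ToType) × Set ι × Set ι) < lam := by
    have h2lam : (2 : Cardinal) < lam :=
      lt_of_lt_of_le (Cardinal.lt_aleph0.2 ⟨2, by norm_num⟩) hreg.aleph0_le
    have hset : #(Set ι) < lam := by rw [Cardinal.mk_set]; exact harith 2 h2lam
    have htt : #((estar+1).ToType) < lam := by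
      rw [Cardinal.mk_toType]; exact Cardinal.lt_ord.1 (hlim.add_one_lt hstar)
    have hfun : #(ι → (estar+1).ToType) < lam := by
      rw [← Cardinal.power_def]; exact harith _ htt
    calc #((ι → (estar+1).ToType) × Set ι × Set ι)
        = #(ι → (estar+1).ToType) * (#(Set ι) * #(Set ι)) := by
          simp [Cardinal.mk_prod, Cardinal.lift_id]
      _ < lam := Cardinal.mul_lt_of_lt hreg.aleph0_le hfun
          (Cardinal.mul_lt_of_lt hreg.aleph0_le hset hset)
  obtain ⟨d, hd⟩ := exists_unbounded_fiber hreg hSDcard dataF estar hstar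
  obtain ⟨εz, hεzl, hεzs, -, hfib₀⟩ := hd 0 hlim.pos
  have hWeq : ∀ ε, dataF ε = d → ∀ i, W ε i = W εz i := by
    intro ε hfib i
    have h1 : (dataF ε).1 i = (dataF εz).1 i := by rw [hfib, hfib₀]
    simp only [hdataF] at h1
    have h2 := ((Ordinal.ToType.mk (o := (estar+1)))).injective h1
    exact congrArg Subtype.val h2
  have hKd : ∀ ε, dataF ε = d → {i | f (e ε) i < f δ i} = d.2.1 := by
    intro ε hfib; rw [← hfib]
  have hPd : ∀ ε, dataF ε = d →
      {i | f (e ε) i < f δ i ∧ f (e (W ε i)) i = f (e ε) i} = d.2.2 := by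
    intro ε hfib; rw [← hfib]
  have hKD : d.2.1 ∈ D := by
    rw [← hKd εz hfib₀]
    exact hlt (e εz) δ (helt εz hεzl) hδ
  by_cases hP : d.2.2 ∈ D
  · exfalso
    obtain ⟨ε₂, hε₂l, hε₂s, hε₂gt, hfib₂⟩ := hd εz hεzl
    have hstrict : {i | f (e εz) i < f (e ε₂) i} ∈ D :=
      hlt (e εz) (e ε₂) (hemono εz ε₂ hε₂gt hε₂l) (lt_trans (helt ε₂ hε₂l) hδ)
    obtain ⟨i, hiP, hiS⟩ := Filter.nonempty_of_mem
      (Filter.inter_mem (Ultrafilter.mem_coe.2 hP) (Ultrafilter.mem_coe.2 hstrict))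
    have h₀ : i ∈ {i | f (e εz) i < f δ i ∧ f (e (W εz i)) i = f (e εz) i} := by
      rw [hPd εz hfib₀]; exact hiP
    have h₂ : i ∈ {i | f (e ε₂) i < f δ i ∧ f (e (W ε₂ i)) i = f (e ε₂) i} := by
      rw [hPd ε₂ hfib₂]; exact hiP
    have hWW : W ε₂ i = W εz i := hWeq ε₂ hfib₂ i
    have heq : f (e εz) i = f (e ε₂) i := by
      have h₂' := h₂.2
      rw [hWW] at h₂'
      exact h₀.2.symm.trans h₂'
    exact (ne_of_lt hiS) heq
  · have hPc : (d.2.2)ᶜ ∈ D := Ultrafilter.compl_mem_iff_notMem.2 hP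
    have hA : d.2.1 ∩ (d.2.2)ᶜ ∈ D := Ultrafilter.mem_coe.1
      (Filter.inter_mem (Ultrafilter.mem_coe.2 hKD) (Ultrafilter.mem_coe.2 hPc))
    set ρ : ι → Ordinal.{u} := fun i => e (W εz i) with hρdef
    have heWle : ∀ i, e (W εz i) ≤ e estar := by
      intro i
      rcases lt_or_eq_of_le (hWle εz i) with h | h
      · exact (hemono _ _ h hstar).le
      · rw [h]
    have hbd : e estar + 1 < δ := by
      rcases hecof (e estar) (helt estar hstar) with ⟨ξ, hξl, hgt⟩
      calc e estar + 1 ≤ e ξ := by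
            rw [Ordinal.add_one_eq_succ]; exact Order.succ_le_of_lt hgt
        _ < δ := helt ξ hξl
    refine ⟨e estar + 1, ρ, hbd, ?_, ?_, ?_⟩
    · intro i; exact lt_of_le_of_lt (heWle i) (hltone _)
    · refine Ultrafilter.mem_coe.1 (Filter.mem_of_superset (Ultrafilter.mem_coe.2 hKD) ?_)
      intro i hi
      have hiK : f (e εz) i < f δ i := by
        have h1 : i ∈ {i | f (e εz) i < f δ i} := by rw [hKd εz hfib₀]; exact hi
        exact h1
      exact (hWspec εz i hεzs hεzl hiK).2.1.le
    · intro α hα hmem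
      obtain ⟨ξ, hξl, hαξ⟩ := hecof α hα
      obtain ⟨ε, hεl, hεs, hεgt, hfib⟩ := hd ξ hξl
      have hαe : α < e ε := hαξ.trans (hemono ξ ε hεgt hεl)
      have hleD : {i | f α i ≤ f (e ε) i} ∈ D :=
        hle α (e ε) hαe.le (lt_trans (helt ε hεl) hδ)
      obtain ⟨i, hi⟩ := Filter.nonempty_of_mem (Filter.inter_mem
        (Filter.inter_mem (Ultrafilter.mem_coe.2 hA) (Ultrafilter.mem_coe.2 hmem))
        (Ultrafilter.mem_coe.2 hleD))
      obtain ⟨⟨⟨hiK, hiPc⟩, hiρ⟩, hiLe⟩ := hi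
      have hiK' : f (e ε) i < f δ i := by
        have h1 : i ∈ {i | f (e ε) i < f δ i} := by rw [hKd ε hfib]; exact hiK
        exact h1
      have spec := hWspec ε i hεs hεl hiK'
      have hWW : W ε i = W εz i := hWeq ε hfib i
      have hle2 : f (e (W ε i)) i ≤ f (e ε) i := by
        rw [hWW]; exact le_trans hiρ hiLe
      rcases lt_or_eq_of_le hle2 with h | h
      · exact spec.2.2 h
      · have h1 : i ∈ {i | f (e ε) i < f δ i ∧ f (e (W ε i)) i = f (e ε) i} := ⟨hiK', h⟩
        rw [hPd ε hfib] at h1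
        exact hiPc h1

theorem mk_le_mk_iff {ι : Type u} (D : Ultrafilter ι) (B : ι → Type u)
    [∀ i, PartialOrder (B i)] (p q : ∀ i, B i) :
    UltraProduct.mk D B p ≤ UltraProduct.mk D B q ↔ {i | p i ≤ q i} ∈ D :=
  Iff.rfl

theorem mk_eq_mk_iff {ι : Type u} (D : Ultrafilter ι) (B : ι → Type u)
    [∀ i, PartialOrder (B i)] (p q : ∀ i, B i) :
    UltraProduct.mk D B p = UltraProduct.mk D B q ↔ {i | p i = q i} ∈ D :=
  ⟨fun h => Quotient.exact h, fun h => Quotient.sound h⟩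

end UltraDepthAux

/-- If `D` is an ultrafilter on an infinite cardinal `κ = #ι`, `λ` is regular with
`|α|^κ < λ` for all `α < λ`, and `Depth⁺(B i) ≤ λ` for each `i`, then
`Depth⁺(∏ᵢ B i / D) ≤ λ⁺`. -/
theorem ultraproduct_depthPlus_le_succ {ι : Type u} [Infinite ι] (D : Ultrafilter ι)
    (B : ι → Type u) [∀ i, BooleanAlgebra (B i)] (lam : Cardinal.{u})
    (hreg : lam.IsRegular) (harith : ∀ α : Cardinal.{u}, α < lam → α ^ #ι < lam)
    (hdepth : ∀ i, orderDepthPlus (B i) ≤ lam) :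
    orderDepthPlus (UltraProduct D B) ≤ Order.succ lam := by
  classical
  have hltone : ∀ a : Ordinal.{u}, a < a + 1 := fun a => by
    rw [Ordinal.add_one_eq_succ]; exact Order.lt_succ a
  have hlim := Cardinal.isSuccLimit_ord hreg.aleph0_le
  have hregsucc : (Order.succ lam).IsRegular := Cardinal.isRegular_succ hreg.aleph0_le
  set Lam := (Order.succ lam).ord with hLamdef
  have hLamlim : Order.IsSuccLimit Lam := Cardinal.isSuccLimit_ord hregsucc.aleph0_le
  have hκlam : #ι < lam := by
    refine lt_of_lt_of_le (Cardinal.cantor #ι) ?_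
    refine (harith 2 ?_).le
    exact lt_of_lt_of_le (Cardinal.lt_aleph0.2 ⟨2, by norm_num⟩) hreg.aleph0_le
  -- main claim: no chain of length Lam in the ultraproduct
  have hmain : ∀ g : Lam.ToType → UltraProduct D B, StrictMono g → False := by
    intro g hg
    set X : Ordinal.{u} → UltraProduct D B := fun o =>
      if h : o < Lam then g ((Ordinal.ToType.mk (o := Lam)) ⟨o, h⟩)
      else g ((Ordinal.ToType.mk (o := Lam)) ⟨0, hLamlim.pos⟩) with hX
    have hXlt : ∀ α β', α < β' → β' < Lam → X α < X β' := by
      intro α β' h1 h2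
      simp only [hX, dif_pos (h1.trans h2), dif_pos h2]
      exact hg (((Ordinal.ToType.mk (o := Lam))).lt_iff_lt.2 (Subtype.mk_lt_mk.2 h1))
    set f : Ordinal.{u} → ∀ i, B i := fun o => (X o).out with hf
    have hmk : ∀ o, UltraProduct.mk D B (f o) = X o := fun o => Quotient.out_eq _
    have hle : ∀ α β', α ≤ β' → β' < Lam → {i | f α i ≤ f β' i} ∈ D := by
      intro α β' h1 h2
      rcases eq_or_lt_of_le h1 with rfl | h1
      · have : {i | f α i ≤ f α i} = Set.univ := by
          ext i; simp
        rw [this]; exact Filter.univ_mem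
      · have h3 : UltraProduct.mk D B (f α) ≤ UltraProduct.mk D B (f β') := by
          rw [hmk, hmk]; exact (hXlt α β' h1 h2).le
        exact (UltraDepthAux.mk_le_mk_iff D B _ _).1 h3
    have hlt : ∀ α β', α < β' → β' < Lam → {i | f α i < f β' i} ∈ D := by
      intro α β' h1 h2
      have hne : {i | f α i = f β' i} ∉ D := by
        intro hmem
        have : UltraProduct.mk D B (f α) = UltraProduct.mk D B (f β') :=
          (UltraDepthAux.mk_eq_mk_iff D B _ _).2 hmem
        rw [hmk, hmk] at this
        exact (hXlt α β' h1 h2).ne this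
      have h3 := hle α β' h1.le h2
      have h4 : {i | f α i = f β' i}ᶜ ∈ D := Ultrafilter.compl_mem_iff_notMem.2 hne
      refine Ultrafilter.mem_coe.1 (Filter.mem_of_superset
        (Filter.inter_mem (Ultrafilter.mem_coe.2 h3) (Ultrafilter.mem_coe.2 h4)) ?_)
      rintro i ⟨hi1, hi2⟩
      exact lt_of_le_of_ne hi1 hi2
    -- the predicate for suitable δ
    set SP : Ordinal.{u} → Prop := fun δ => δ < Lam ∧ ∃ e : Ordinal.{u} → Ordinal.{u},
      (∀ ξ ζ, ξ < ζ → ζ < lam.ord → e ξ < e ζ) ∧ (∀ ξ, ξ < lam.ord → e ξ < δ) ∧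
      (∀ α, α < δ → ∃ ξ, ξ < lam.ord ∧ α < e ξ) with hSP
    have hpd : ∀ δ, ∃ (bb : Ordinal.{u}) (ρ : ι → Ordinal.{u}), SP δ →
        bb < δ ∧ (∀ i, ρ i < bb) ∧ {i | f (ρ i) i ≤ f δ i} ∈ D ∧
        ∀ α, α < δ → {i | f (ρ i) i ≤ f α i} ∉ D := by
      intro δ
      by_cases h : SP δ
      · obtain ⟨hδ, e, he1, he2, he3⟩ := h
        obtain ⟨bb, ρ, hres⟩ :=
          UltraDepthAux.perDelta D B hreg harith hdepth hκlam f hlt hle hδ e he1 he2 he3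
        exact ⟨bb, ρ, fun _ => hres⟩
      · exact ⟨0, fun _ => 0, fun hh => absurd hh h⟩
    choose Bf Rf hBR using hpd
    have hinj : ∀ δ δ', SP δ → SP δ' → δ < δ' → Rf δ ≠ Rf δ' := by
      intro δ δ' hS hS' hlt' heq
      obtain ⟨-, -, hQ1, -⟩ := hBR δ hS
      obtain ⟨-, -, -, hQ2⟩ := hBR δ' hS'
      refine hQ2 δ hlt' ?_
      rw [← heq]
      exact hQ1
    have hgb : ∀ β', β' < Lam → ∃ gb, gb < Lam ∧ ∀ δ, SP δ → Bf δ ≤ β' → δ ≤ gb := by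
      intro β' hβ'
      set cd : Ordinal.{u} → (ι → (β'+1).ToType) := fun δ i =>
        (Ordinal.ToType.mk (o := (β'+1)))
          ⟨min (Rf δ i) β', lt_of_le_of_lt (min_le_right _ _) (hltone β')⟩ with hcd
      set uB : (ι → (β'+1).ToType) → Ordinal.{u} := fun z =>
        if h : ∃ δ, (SP δ ∧ Bf δ ≤ β') ∧ cd δ = z then h.choose else 0 with huB
      have hval : ∀ z, uB z < Lam := by
        intro z
        by_cases h : ∃ δ, (SP δ ∧ Bf δ ≤ β') ∧ cd δ = z
        · simp only [huB, dif_pos h]; exact h.choose_spec.1.1.1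
        · simp only [huB, dif_neg h]; exact hLamlim.pos
      have hcardcd : #(ι → (β'+1).ToType) < Lam.cof := by
        rw [hregsucc.cof_eq]
        have hβc : (β'+1).card ≤ lam :=
          Order.lt_succ_iff.1 (Cardinal.lt_ord.1 (hLamlim.add_one_lt hβ'))
        calc #(ι → (β'+1).ToType) = #((β'+1).ToType) ^ #ι := (Cardinal.power_def _ _).symm
          _ = (β'+1).card ^ #ι := by rw [Cardinal.mk_toType]
          _ ≤ lam ^ #ι := Cardinal.power_le_power_right hβc
          _ ≤ lam := UltraDepthAux.lam_pow_le hreg hκlam harith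
          _ < Order.succ lam := Order.lt_succ lam
      refine ⟨⨆ z, uB z, Ordinal.iSup_lt_ord hcardcd hval, ?_⟩
      intro δ hδS hδB
      have hex : ∃ δ', (SP δ' ∧ Bf δ' ≤ β') ∧ cd δ' = cd δ := ⟨δ, ⟨hδS, hδB⟩, rfl⟩
      have huBval : uB (cd δ) = hex.choose := by simp only [huB, dif_pos hex]
      obtain ⟨⟨hS', hB'⟩, hcd'⟩ := hex.choose_spec
      have hRfeq : Rf hex.choose = Rf δ := by
        funext i
        have h1 := congrFun hcd' i
        simp only [hcd] at h1
        have h2 := ((Ordinal.ToType.mk (o := (β'+1)))).injective h1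
        have h3 := congrArg Subtype.val h2
        have hXle : Rf hex.choose i ≤ β' := ((hBR hex.choose hS').2.1 i).le.trans hB'
        have hYle : Rf δ i ≤ β' := ((hBR δ hδS).2.1 i).le.trans hδB
        simp only [min_eq_left hXle, min_eq_left hYle] at h3
        exact h3
      rcases lt_trichotomy hex.choose δ with h | h | h
      · exact absurd hRfeq (hinj _ _ hS' hδS h)
      · exact le_of_eq_of_le (huBval.trans h).symm (Ordinal.le_iSup uB (cd δ))
      · exact absurd hRfeq.symm (hinj _ _ hδS hS' h)
    have hgb' : ∀ β', ∃ gb, β' < Lam → (gb < Lam ∧ ∀ δ, SP δ → Bf δ ≤ β' → δ ≤ gb) := by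
      intro β'
      by_cases h : β' < Lam
      · obtain ⟨gb, h1, h2⟩ := hgb β' h; exact ⟨gb, fun _ => ⟨h1, h2⟩⟩
      · exact ⟨0, fun hh => absurd hh h⟩
    choose G hG using hgb'
    set h2f : Ordinal.{u} → Ordinal.{u} := fun β' => max (G β' + 1) (β' + 1) with hh2f
    have hh2lt : ∀ β', β' < Lam → h2f β' < Lam := fun β' hβ =>
      max_lt (hLamlim.add_one_lt (hG β' hβ).1) (hLamlim.add_one_lt hβ)
    set H : Ordinal.{u} → Ordinal.{u} := fun o =>
      Ordinal.blsub (o+1) (fun β' _ => h2f β') with hH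
    have hHlt : ∀ o, o < Lam → H o < Lam := by
      intro o ho
      refine Ordinal.blsub_lt_ord ?_ ?_
      · rw [hregsucc.cof_eq]
        exact Cardinal.lt_ord.1 (hLamlim.add_one_lt ho)
      · intro β' hβ'
        exact hh2lt β' (hβ'.trans (hLamlim.add_one_lt ho))
    have hHgt : ∀ o, o < H o := by
      intro o
      have h1 : h2f o < H o := Ordinal.lt_blsub (fun β' _ => h2f β') o (hltone o)
      exact (lt_of_lt_of_le (hltone o) (le_max_right _ _)).trans h1
    set e : Ordinal.{u} → Ordinal.{u} :=
      WellFounded.fix Ordinal.lt_wf (fun ξ IH => H (Ordinal.bsup ξ IH)) with he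
    have he_eq : ∀ ξ, e ξ = H (Ordinal.bsup ξ (fun ζ _ => e ζ)) := by
      intro ξ
      rw [he, WellFounded.fix_eq]
    have helt : ∀ ξ, ξ < lam.ord → e ξ < Lam := by
      intro ξ
      induction ξ using Ordinal.induction with
      | h ξ IH =>
        intro hξ
        rw [he_eq]
        refine hHlt _ (Ordinal.bsup_lt_ord ?_ ?_)
        · rw [hregsucc.cof_eq]
          exact (Cardinal.lt_ord.1 hξ).trans (Order.lt_succ lam)
        · exact fun ζ hζ => IH ζ hζ (hζ.trans hξ)
    have hemono : ∀ ξ ζ, ξ < ζ → ζ < lam.ord → e ξ < e ζ := by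
      intro ξ ζ h1 _h2
      rw [he_eq ζ]
      exact lt_of_le_of_lt (Ordinal.le_bsup (fun ζ' _ => e ζ') ξ h1) (hHgt _)
    set δs := Ordinal.bsup lam.ord (fun ξ _ => e ξ) with hδs
    have hδsΛ : δs < Lam := Ordinal.bsup_lt_ord
      (by rw [hregsucc.cof_eq, Cardinal.card_ord]; exact Order.lt_succ lam) helt
    have heδ : ∀ ξ, ξ < lam.ord → e ξ < δs := fun ξ hξ =>
      lt_of_lt_of_le (hemono ξ (ξ+1) (hltone ξ) (hlim.add_one_lt hξ))
        (Ordinal.le_bsup _ (ξ+1) (hlim.add_one_lt hξ))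
    have hcof : ∀ α, α < δs → ∃ ξ, ξ < lam.ord ∧ α < e ξ := by
      intro α hα
      obtain ⟨ξ, hξ, hlt'⟩ := (Ordinal.lt_bsup _).1 hα
      exact ⟨ξ, hξ, hlt'⟩
    have hSPδs : SP δs := ⟨hδsΛ, e, hemono, heδ, hcof⟩
    obtain ⟨hBlt, hρlt, -, -⟩ := hBR δs hSPδs
    have hclos : G (Bf δs) < δs := by
      obtain ⟨ξ, hξ, hgt⟩ := hcof (Bf δs) hBlt
      have h1 : h2f (Bf δs) < e (ξ+1) := by
        rw [he_eq (ξ+1)]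
        refine Ordinal.lt_blsub (fun β' _ => h2f β') (Bf δs) ?_
        have hble : Bf δs ≤ Ordinal.bsup (ξ+1) (fun ζ _ => e ζ) :=
          (hgt.le).trans (Ordinal.le_bsup _ ξ (hltone ξ))
        exact lt_of_le_of_lt hble (hltone _)
      have h2 : G (Bf δs) < h2f (Bf δs) :=
        lt_of_lt_of_le (hltone _) (le_max_left _ _)
      exact (h2.trans h1).trans (heδ (ξ+1) (hlim.add_one_lt hξ))
    have hfin : δs ≤ G (Bf δs) := (hG (Bf δs) (hBlt.trans hδsΛ)).2 δs hSPδs le_rfl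
    exact absurd hfin (not_le.2 hclos)
  -- reduce the goal to hmain
  haveI hne : Nonempty {θ : Cardinal.{u} // ∃ f : θ.ord.ToType → UltraProduct D B, StrictMono f} := by
    refine ⟨⟨0, ?_⟩⟩
    rw [Cardinal.ord_zero]
    exact ⟨fun t => isEmptyElim t, by intro a; exact isEmptyElim a⟩
  rw [orderDepthPlus]
  refine ciSup_le' ?_
  rintro ⟨θ, hθ⟩
  simp only
  refine Order.succ_le_succ ?_
  by_contra hgt
  push_neg at hgt
  have hord : Lam ≤ θ.ord := Cardinal.ord_le_ord.2 (Order.succ_le_of_lt hgt)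
  obtain ⟨F, hF⟩ := hθ
  refine hmain (fun t => F ((Ordinal.ToType.mk (o := θ.ord))
    ⟨((((Ordinal.ToType.mk (o := Lam))).symm t : Set.Iio Lam) : Ordinal.{u}),
      Set.mem_Iio.2 (lt_of_lt_of_le (((Ordinal.ToType.mk (o := Lam))).symm t).2 hord)⟩)) ?_
  intro a b hab
  apply hF
  rw [((Ordinal.ToType.mk (o := θ.ord))).lt_iff_lt]
  refine Subtype.mk_lt_mk.2 ?_
  exact Subtype.coe_lt_coe.2 ((((Ordinal.ToType.mk (o := Lam))).symm.lt_iff_lt).2 hab)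
end

section
/- If λ is a strong limit cardinal with cofinality greater than κ, D is an ultrafilter on κ, and Depth(B_i) < λ for every i < κ, then Depth(∏_{i<κ} B_i / D) < λ. -/
open Cardinal Ordinal

universe u


noncomputable instance (priority := 1001) ordinalToTypeIsWellOrder (o : Ordinal.{u}) :
    IsWellOrder o.ToType (· < ·) := isWellOrder_lt

noncomputable instance (priority := 1001) subtypeSetIsWellOrder {β : Type u} [LinearOrder β]
    [WellFoundedLT β] (V : Set β) : IsWellOrder V (· < ·) := isWellOrder_lt

/-- The ordinal rank of an element of a well-ordered type. -/
noncomputable def ordOf {β : Type u} [LinearOrder β] [WellFoundedLT β] (x : β) : Ordinal.{u} :=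
  typein (α := β) (· < ·) x

/-- The element of a well-ordered type with given ordinal rank. -/
noncomputable def enumOf (β : Type u) [LinearOrder β] [WellFoundedLT β] (o : Ordinal.{u})
    (h : o < Ordinal.type ((· < ·) : β → β → Prop)) : β :=
  enum (α := β) (· < ·) ⟨o, h⟩

section basic
variable {β : Type u} [LinearOrder β] [WellFoundedLT β]

lemma ordOf_lt_type (x : β) : ordOf x < Ordinal.type ((· < ·) : β → β → Prop) :=
  typein_lt_type _ x

lemma ordOf_lt_ordOf {x y : β} : ordOf x < ordOf y ↔ x < y :=
  typein_lt_typein (α := β) (· < ·)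

lemma ordOf_injective : Function.Injective (ordOf (β := β)) := fun x y h => by
  by_contra hne
  rcases lt_or_gt_of_ne hne with h1 | h1
  · exact absurd (h ▸ ordOf_lt_ordOf.2 h1) (lt_irrefl _)
  · exact absurd (h ▸ ordOf_lt_ordOf.2 h1) (lt_irrefl _)

lemma ordOf_enumOf (o : Ordinal.{u}) (h : o < Ordinal.type ((· < ·) : β → β → Prop)) :
    ordOf (enumOf β o h) = o :=
  typein_enum _ _

lemma enumOf_lt_enumOf {o₁ o₂ : Ordinal.{u}} {h₁ : o₁ < Ordinal.type ((· < ·) : β → β → Prop)}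
    {h₂ : o₂ < Ordinal.type ((· < ·) : β → β → Prop)} :
    enumOf β o₁ h₁ < enumOf β o₂ h₂ ↔ o₁ < o₂ :=
  enum_lt_enum.trans Subtype.mk_lt_mk

lemma ordOf_lt_of_toType {o : Ordinal.{u}} (x : o.ToType) : ordOf x < o := by
  have := ordOf_lt_type x
  rwa [type_toType] at this
end basic

section ER
attribute [local instance] Classical.propDecidable
set_option linter.unusedSectionVars false
variable {W : Type u} [LinearOrder W] [WellFoundedLT W] {ι : Type u} {B : ι → Type u}
  [∀ i, Preorder (B i)]

/-- color of an unordered pair -/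
def pcol (g : W → ∀ i, B i) (a b : W) : Set ι := {i | g (min a b) i < g (max a b) i}

lemma pcol_comm (g : W → ∀ i, B i) (a b : W) : pcol g a b = pcol g b a := by
  simp [pcol, min_comm, max_comm]

/-- witness set at stage ξ -/
def wset (g : W → ∀ i, B i) (γ : W) (ξ : Ordinal.{u}) (E : Ordinal.{u} → W) : Set W :=
  {δ | ∀ η, η < ξ → E η ≠ δ ∧ pcol g (E η) δ = pcol g (E η) γ}

lemma wset_congr (g : W → ∀ i, B i) (γ : W) (ξ : Ordinal.{u}) {E E' : Ordinal.{u} → W}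
    (h : ∀ η < ξ, E η = E' η) : wset g γ ξ E = wset g γ ξ E' := by
  ext δ
  constructor <;> intro hδ η hη <;> [rw [← h η hη]; rw [h η hη]] <;> exact hδ η hη

noncomputable def eseq (g : W → ∀ i, B i) (γ : W) : Ordinal.{u} → W :=
  Ordinal.lt_wf.fix fun ξ ih =>
    let E : Ordinal.{u} → W := fun η => if h : η < ξ then ih η h else γ
    if h : (wset g γ ξ E).Nonempty then (wellFounded_lt (α := W)).min _ h else γ

lemma eseq_def (g : W → ∀ i, B i) (γ : W) (ξ : Ordinal.{u}) :
    eseq g γ ξ = if h : (wset g γ ξ (eseq g γ)).Nonempty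
      then (wellFounded_lt (α := W)).min _ h else γ := by
  have h0 := WellFounded.fix_eq Ordinal.lt_wf (fun ξ (ih : ∀ η, η < ξ → W) =>
    let E : Ordinal.{u} → W := fun η => if h : η < ξ then ih η h else γ
    if h : (wset g γ ξ E).Nonempty then (wellFounded_lt (α := W)).min _ h else γ) ξ
  show Ordinal.lt_wf.fix _ ξ = _
  rw [h0]
  show (if h : (wset g γ ξ fun η => if h : η < ξ then eseq g γ η else γ).Nonempty
      then (wellFounded_lt (α := W)).min _ h else γ) = _
  have hE : wset g γ ξ (fun η => if h : η < ξ then eseq g γ η else γ) = wset g γ ξ (eseq g γ) :=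
    wset_congr g γ ξ (fun η hη => by simp [hη])
  rw [hE]

lemma eseq_mem (g : W → ∀ i, B i) (γ : W) {ξ : Ordinal.{u}}
    (hγ : ∀ η < ξ, eseq g γ η ≠ γ) : eseq g γ ξ ∈ wset g γ ξ (eseq g γ) := by
  have hne : (wset g γ ξ (eseq g γ)).Nonempty := ⟨γ, fun η hη => ⟨hγ η hη, rfl⟩⟩
  rw [eseq_def, dif_pos hne]
  exact WellFounded.min_mem _ _ hne

lemma exists_stop (g : W → ∀ i, B i) (γ : W) : ∃ ξ : Ordinal.{u}, eseq g γ ξ = γ := by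
  by_contra h
  push_neg at h
  have hinj : ∀ η ξ : Ordinal.{u}, η < ξ → eseq g γ η ≠ eseq g γ ξ := fun η ξ hlt =>
    (eseq_mem g γ (fun η _ => h η) η hlt).1
  have hinj2 : Function.Injective
      (fun x : (Order.succ #W).ord.ToType => eseq g γ (ordOf x)) := by
    intro x y hxy
    by_contra hne
    rcases lt_or_gt_of_ne hne with h1 | h1
    · exact hinj _ _ (ordOf_lt_ordOf.2 h1) hxy
    · exact hinj _ _ (ordOf_lt_ordOf.2 h1) hxy.symm
  have hle := Cardinal.mk_le_of_injective hinj2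
  rw [mk_toType, card_ord] at hle
  exact (Order.lt_succ #W).not_ge hle

noncomputable def stopOrd (g : W → ∀ i, B i) (γ : W) : Ordinal.{u} :=
  Ordinal.lt_wf.min {ξ | eseq g γ ξ = γ} (exists_stop g γ)

lemma eseq_stop (g : W → ∀ i, B i) (γ : W) : eseq g γ (stopOrd g γ) = γ :=
  Ordinal.lt_wf.min_mem _ (exists_stop g γ)

lemma eseq_ne_of_lt_stop (g : W → ∀ i, B i) (γ : W) {η : Ordinal.{u}}
    (h : η < stopOrd g γ) : eseq g γ η ≠ γ := fun he =>
  Ordinal.lt_wf.not_lt_min _ (he : η ∈ {ξ | eseq g γ ξ = γ}) h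

lemma eseq_mem' (g : W → ∀ i, B i) (γ : W) {ξ : Ordinal.{u}} (hξ : ξ ≤ stopOrd g γ) :
    eseq g γ ξ ∈ wset g γ ξ (eseq g γ) :=
  eseq_mem g γ (fun η hη => eseq_ne_of_lt_stop g γ (lt_of_lt_of_le hη hξ))

lemma eseq_congr (g : W → ∀ i, B i) (γ γ' : W) (Λ : Ordinal.{u})
    (hΛ : Λ ≤ stopOrd g γ) (hΛ' : Λ ≤ stopOrd g γ')
    (hcol : ∀ η < Λ, pcol g (eseq g γ η) γ = pcol g (eseq g γ' η) γ') :
    ∀ ξ, ξ ≤ Λ → eseq g γ ξ = eseq g γ' ξ := by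
  intro ξ
  induction ξ using Ordinal.induction with
  | h ξ ih =>
    intro hξ
    have key : ∀ η, η < ξ →
        eseq g γ η = eseq g γ' η ∧ pcol g (eseq g γ η) γ = pcol g (eseq g γ' η) γ' :=
      fun η hη => ⟨ih η hη (le_of_lt (lt_of_lt_of_le hη hξ)), hcol η (lt_of_lt_of_le hη hξ)⟩
    have hsets : wset g γ ξ (eseq g γ) = wset g γ' ξ (eseq g γ') := by
      ext δ
      constructor <;> intro hδ η hη
      · exact ⟨by rw [← (key η hη).1]; exact (hδ η hη).1,
          by rw [← (key η hη).2, ← (key η hη).1]; exact (hδ η hη).2⟩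
      · exact ⟨by rw [(key η hη).1]; exact (hδ η hη).1,
          by rw [(key η hη).2, (key η hη).1]; exact (hδ η hη).2⟩
    have h1 : (wset g γ ξ (eseq g γ)).Nonempty :=
      ⟨γ, fun η hη => ⟨eseq_ne_of_lt_stop g γ (lt_of_lt_of_le hη (le_trans hξ hΛ)), rfl⟩⟩
    have h2 : (wset g γ' ξ (eseq g γ')).Nonempty := hsets ▸ h1
    rw [eseq_def g γ, eseq_def g γ', dif_pos h1, dif_pos h2]
    congr 1

lemma exists_long (g : W → ∀ i, B i) (σ : Cardinal.{u}) (hσ : ℵ₀ ≤ σ) (hι : 2 ^ #ι ≤ σ)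
    (hW : 2 ^ σ < #W) : ∃ γ : W, (Order.succ σ).ord ≤ stopOrd g γ := by
  by_contra h
  push_neg at h
  set X := (Order.succ σ).ord.ToType with hX
  have hXcard : #X = Order.succ σ := by rw [hX, mk_toType, card_ord]
  have htype : ∀ γ : W, stopOrd g γ < Ordinal.type ((· < ·) : X → X → Prop) := by
    intro γ; exact (h γ).trans_le (type_toType _).ge
  set f : W → X := fun γ => enumOf X (stopOrd g γ) (htype γ) with hf
  have hfiber : ∀ x : X, #(f ⁻¹' {x}) ≤ 2 ^ σ := by
    intro x
    set Y := ((ordOf x).ToType → Set ι) with hY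
    have hstop : ∀ γ : W, f γ = x → stopOrd g γ = ordOf x := by
      intro γ hγ
      rw [← hγ, hf]
      exact (ordOf_enumOf _ _).symm
    have hemb : Function.Injective (fun γ : f ⁻¹' {x} =>
        (fun y => pcol g (eseq g γ.1 (ordOf y)) γ.1 : Y)) := by
      rintro ⟨γ, hγ⟩ ⟨γ', hγ'⟩ hgg
      have hL : stopOrd g γ = ordOf x := hstop γ hγ
      have hL' : stopOrd g γ' = ordOf x := hstop γ' hγ'
      have hcol : ∀ η < stopOrd g γ, pcol g (eseq g γ η) γ = pcol g (eseq g γ' η) γ' := by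
        intro η hη
        have hη' : η < Ordinal.type ((· < ·) : (ordOf x).ToType → (ordOf x).ToType → Prop) := by
          rw [type_toType]
          exact hL ▸ hη
        have := congrFun hgg (enumOf _ η hη')
        simpa [ordOf_enumOf] using this
      have hfin := eseq_congr g γ γ' (stopOrd g γ) le_rfl (by rw [hL, ← hL'])
        hcol (stopOrd g γ) le_rfl
      have ha : eseq g γ (stopOrd g γ) = γ := eseq_stop g γ
      have hb : eseq g γ' (stopOrd g γ) = γ' := by rw [hL, ← hL']; exact eseq_stop g γ'
      rw [ha, hb] at hfin
      exact Subtype.ext hfin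
    have hYcard : #Y ≤ 2 ^ σ := by
      have h1 : (ordOf x).card ≤ σ := by
        have h2 := ordOf_lt_of_toType x
        rw [lt_ord] at h2
        exact Order.lt_succ_iff.1 h2
      calc #Y = #(Set ι) ^ (ordOf x).card := by
              rw [hY, ← mk_toType]; exact (power_def _ _).symm
        _ = (2 ^ #ι) ^ (ordOf x).card := by rw [mk_set]
        _ ≤ (2 ^ σ) ^ σ :=
            (power_le_power_left (power_ne_zero _ two_ne_zero) h1).trans
              (power_le_power_right (hι.trans (cantor σ).le))
        _ = 2 ^ (σ * σ) := by rw [power_mul]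
        _ = 2 ^ σ := by rw [mul_eq_self hσ]
    exact (Cardinal.mk_le_of_injective hemb).trans hYcard
  have hcount := Cardinal.mk_le_mk_mul_of_mk_preimage_le f hfiber
  rw [hXcard] at hcount
  have hWle : #W ≤ 2 ^ σ := by
    refine hcount.trans ?_
    calc Order.succ σ * 2 ^ σ ≤ 2 ^ σ * 2 ^ σ :=
          mul_le_mul_left (Order.succ_le_of_lt (cantor σ)) _
      _ = 2 ^ σ := mul_eq_self (hσ.trans (cantor σ).le)
  exact hW.not_ge hWle

lemma erdos_rado_chain (g : W → ∀ i, B i) (σ : Cardinal.{u}) (hσ : ℵ₀ ≤ σ) (hι : 2 ^ #ι ≤ σ)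
    (hW : 2 ^ σ < #W) :
    ∃ (V : Set W) (A : Set ι), #V = Order.succ σ ∧
      ∀ a ∈ V, ∀ b ∈ V, a < b → pcol g a b = A := by
  obtain ⟨γ, hγ⟩ := exists_long g σ hσ hι hW
  set X := (Order.succ σ).ord.ToType with hX
  have hXcard : #X = Order.succ σ := by rw [hX, mk_toType, card_ord]
  have hlt : ∀ x : X, ordOf x < stopOrd g γ := fun x =>
    lt_of_lt_of_le (ordOf_lt_of_toType (o := (Order.succ σ).ord) x) hγ
  obtain ⟨A, hA⟩ := Cardinal.infinite_pigeonhole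
    (fun x : X => pcol g (eseq g γ (ordOf x)) γ)
    (by rw [hXcard]; exact hσ.trans (Order.le_succ σ))
    (by rw [hXcard, (isRegular_succ hσ).cof_eq, mk_set]
        exact lt_of_le_of_lt hι (Order.lt_succ σ))
  set S := (fun x : X => pcol g (eseq g γ (ordOf x)) γ) ⁻¹' {A} with hS
  set m : S → W := fun x => eseq g γ (ordOf x.1) with hm
  have hminj : Function.Injective m := by
    rintro ⟨x, hx⟩ ⟨y, hy⟩ hxy
    by_contra hne
    have hne' : x ≠ y := fun hxx => hne (Subtype.ext hxx)
    rcases lt_or_gt_of_ne hne' with h1 | h1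
    · exact (eseq_mem' g γ (le_of_lt (hlt y)) _ (ordOf_lt_ordOf.2 h1)).1 hxy
    · exact (eseq_mem' g γ (le_of_lt (hlt x)) _ (ordOf_lt_ordOf.2 h1)).1 hxy.symm
  refine ⟨Set.range m, A, ?_, ?_⟩
  · rw [mk_range_eq _ hminj, hA, hXcard]
  · rintro a ⟨x, rfl⟩ b ⟨y, rfl⟩ hab
    have hxy : x.1 ≠ y.1 := by
      intro hxx
      refine hab.ne ?_
      show eseq g γ (ordOf x.1) = eseq g γ (ordOf y.1)
      rw [hxx]
    rcases lt_or_gt_of_ne hxy with h1 | h1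
    · have h2 := (eseq_mem' g γ (le_of_lt (hlt y.1)) _ (ordOf_lt_ordOf.2 h1)).2
      show pcol g (eseq g γ (ordOf x.1)) (eseq g γ (ordOf y.1)) = A
      rw [h2]
      exact x.2
    · have h2 := (eseq_mem' g γ (le_of_lt (hlt x.1)) _ (ordOf_lt_ordOf.2 h1)).2
      show pcol g (eseq g γ (ordOf x.1)) (eseq g γ (ordOf y.1)) = A
      rw [pcol_comm, h2]
      exact y.2
end ER

lemma exists_strictMono_of_le_mk {β : Type u} [LinearOrder β] [WellFoundedLT β]
    {ν : Cardinal.{u}} (V : Set β) (hV : ν ≤ #V) :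
    ∃ f : ν.ord.ToType → β, StrictMono f ∧ ∀ x, f x ∈ V := by
  have h1 : ν.ord ≤ Ordinal.type ((· < ·) : V → V → Prop) := by
    rw [Cardinal.ord_le, Ordinal.card_type]
    exact hV
  have h2 : ∀ x : ν.ord.ToType, ordOf x < Ordinal.type ((· < ·) : V → V → Prop) :=
    fun x => lt_of_lt_of_le (ordOf_lt_of_toType x) h1
  refine ⟨fun x => (enumOf V (ordOf x) (h2 x) : V).1, ?_, ?_⟩
  · intro x y hxy
    exact Subtype.coe_lt_coe.2 (enumOf_lt_enumOf.2 (ordOf_lt_ordOf.2 hxy))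
  · intro x
    exact (enumOf V (ordOf x) (h2 x)).2

/-- If `λ` is a strong limit cardinal of cofinality `> κ` and `Depth(B i) < λ` for every
`i < κ`, then `Depth(∏ᵢ B i / D) < λ`. -/
theorem ultraproduct_depth_lt_of_strong_limit {ι : Type u} [Infinite ι] (D : Ultrafilter ι)
    (B : ι → Type u) [∀ i, BooleanAlgebra (B i)] (lam : Cardinal.{u})
    (hsl : lam.IsStrongLimit) (hcof : #ι < lam.ord.cof)
    (hdepth : ∀ i, orderDepth (B i) < lam) :
    orderDepth (UltraProduct D B) < lam := by
  classical
  have hκlam : #ι < lam := hcof.trans_le (Ordinal.cof_ord_le lam)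
  set ν := ⨆ i, orderDepth (B i) with hνdef
  have hbdd : BddAbove (Set.range fun i => orderDepth (B i)) :=
    ⟨lam, by rintro _ ⟨i, rfl⟩; exact (hdepth i).le⟩
  have hνlam : ν < lam := Ordinal.iSup_lt hcof hdepth
  set σ := (2 : Cardinal.{u}) ^ (#ι + ν) with hσdef
  have hσ : ℵ₀ ≤ σ :=
    (aleph0_le_mk ι).trans ((self_le_add_right _ _).trans (cantor _).le)
  have h2ι : 2 ^ #ι ≤ σ := power_le_power_left two_ne_zero (self_le_add_right _ _)
  have hνσ : ν ≤ σ := (self_le_add_left _ _).trans (cantor _).le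
  have hσlam : σ < lam :=
    hsl.two_power_lt (Cardinal.add_lt_of_lt hsl.aleph0_le hκlam hνlam)
  have h2σlam : 2 ^ σ < lam := hsl.two_power_lt hσlam
  refine lt_of_le_of_lt (?_ : orderDepth (UltraProduct D B) ≤ 2 ^ σ) h2σlam
  unfold orderDepth
  refine ciSup_le' ?_
  rintro ⟨θ, F, hF⟩
  show θ ≤ 2 ^ σ
  by_contra hgt
  push_neg at hgt
  have hWcard : 2 ^ σ < #(θ.ord.ToType) := by rw [mk_toType, card_ord]; exact hgt
  set g : θ.ord.ToType → ∀ i, B i := fun w => Quotient.out (F w) with hg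
  have hmkout : ∀ w : θ.ord.ToType, UltraProduct.mk D B (g w) = F w := fun w => Quotient.out_eq _
  have hval : ∀ a b : θ.ord.ToType, a < b → pcol g a b ∈ D := by
    intro a b hab
    have hlt : F a < F b := hF hab
    have hle : ∀ᶠ i in (D : Filter ι), g a i ≤ g b i := by
      have h1 : UltraProduct.mk D B (g a) ≤ UltraProduct.mk D B (g b) := by
        rw [hmkout, hmkout]; exact hlt.le
      exact h1
    have hne : ¬ ∀ᶠ i in (D : Filter ι), g a i = g b i := by
      intro h1
      have h2 : UltraProduct.mk D B (g a) = UltraProduct.mk D B (g b) := Quotient.sound h1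
      rw [hmkout, hmkout] at h2
      exact hlt.ne h2
    have hne' : ∀ᶠ i in (D : Filter ι), g a i ≠ g b i := Ultrafilter.eventually_not.2 hne
    have hltev : ∀ᶠ i in (D : Filter ι), g a i < g b i :=
      hle.mp (hne'.mono fun i h1 h2 => lt_of_le_of_ne h2 h1)
    have hpc : pcol g a b = {i | g a i < g b i} := by
      simp [pcol, min_eq_left hab.le, max_eq_right hab.le]
    rw [hpc]
    exact hltev
  obtain ⟨V, A, hVcard, hhom⟩ := erdos_rado_chain g σ hσ h2ι hWcard
  have hA : A ∈ D := by
    have h2 : (1 : Cardinal) < #V := by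
      rw [hVcard]
      exact lt_of_lt_of_le one_lt_aleph0 (hσ.trans (Order.le_succ σ))
    rw [Cardinal.one_lt_iff_nontrivial] at h2
    obtain ⟨⟨a, ha⟩, ⟨b, hb⟩, hab⟩ := h2.exists_pair_ne
    have hab' : a ≠ b := fun hh => hab (Subtype.ext hh)
    rcases lt_or_gt_of_ne hab' with h1 | h1
    · rw [← hhom a ha b hb h1]; exact hval a b h1
    · rw [← hhom b hb a ha h1]; exact hval b a h1
  obtain ⟨i, hi⟩ := Ultrafilter.nonempty_of_mem hA
  obtain ⟨f0, hf0mono, hf0mem⟩ := exists_strictMono_of_le_mk V hVcard.ge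
  have hchain : StrictMono (fun x => g (f0 x) i) := by
    intro x y hxy
    have h1 := hf0mono hxy
    have h2 := hhom _ (hf0mem x) _ (hf0mem y) h1
    have h3 : i ∈ pcol g (f0 x) (f0 y) := h2 ▸ hi
    have hpc : pcol g (f0 x) (f0 y) = {j | g (f0 x) j < g (f0 y) j} := by
      simp [pcol, min_eq_left h1.le, max_eq_right h1.le]
    rw [hpc] at h3
    exact h3
  have hle2 : Order.succ σ ≤ orderDepth (B i) := by
    have hbd : BddAbove (Set.range
        fun p : {θ : Cardinal.{u} // ∃ f : θ.ord.ToType → B i, StrictMono f} => p.1) := by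
      refine ⟨#(B i), ?_⟩
      rintro _ ⟨⟨θ', hθ'⟩, rfl⟩
      obtain ⟨f', hf'⟩ := hθ'
      calc θ' = #(θ'.ord.ToType) := by rw [mk_toType, card_ord]
        _ ≤ #(B i) := mk_le_of_injective hf'.injective
    exact le_ciSup hbd
      (⟨Order.succ σ, fun x => g (f0 x) i, hchain⟩ :
        {θ : Cardinal.{u} // ∃ f : θ.ord.ToType → B i, StrictMono f})
  have hge : orderDepth (B i) ≤ ν := le_ciSup hbdd i
  exact absurd ((hle2.trans hge).trans hνσ) (Order.lt_succ σ).not_ge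
end
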